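/- arXiv:1405.5869 — 2 statements merged into one kernel-verified Lean document; each statement's English description precedes it below -/
import Mathlib

section
/- Let q, x ∈ R^D with ||q||_2 = 1 and ||x||_2 ≤ U < 1. If q^T x ≥ S_0 then ||Q(q) - P(x)||_2 ≤ √(1 + m/4 - 2S_0 + U^{2^{m+1}}), and if q^T x ≤ c S_0 then ||Q(q) - P(x)||_2 ≥ √(1 + m/4 - 2cS_0). -/
noncomputable def alshP (D m : ℕ) (x : EuclideanSpace ℝ (Fin D)) :
    EuclideanSpace ℝ (Fin (D + m)) :=
  WithLp.toLp 2 (fun i => Fin.addCases (fun j => x j) (fun j => ‖x‖ ^ (2 ^ (j.val + 1))) i)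

noncomputable def alshQ (D m : ℕ) (q : EuclideanSpace ℝ (Fin D)) :
    EuclideanSpace ℝ (Fin (D + m)) :=
  WithLp.toLp 2 (fun i => Fin.addCases (fun j => q j) (fun _ => 1 / 2) i)

lemma alsh_telescope (t : ℝ) : ∀ m : ℕ,
    ∑ j : Fin m, (1 / 2 - t ^ (2 ^ j.val)) ^ 2 = (m : ℝ) / 4 - t + t ^ (2 ^ m) := by
  intro m
  induction m with
  | zero => simp
  | succ n ih =>
    rw [Fin.sum_univ_castSucc]
    simp only [Fin.coe_castSucc, Fin.val_last, ih]
    have : (t ^ (2 ^ n)) ^ 2 = t ^ (2 ^ (n + 1)) := by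
      rw [← pow_mul, pow_succ, mul_comm]
    push_cast
    linear_combination this

lemma alsh_norm_sq (D m : ℕ) (q x : EuclideanSpace ℝ (Fin D)) (hq : ‖q‖ = 1) :
    ‖alshQ D m q - alshP D m x‖ ^ 2 =
      1 + (m : ℝ) / 4 - 2 * (∑ i, q i * x i) + ‖x‖ ^ (2 ^ (m + 1)) := by
  have hsum : ∀ (n : ℕ) (y : EuclideanSpace ℝ (Fin n)), ‖y‖ ^ 2 = ∑ i, (y i) ^ 2 := by
    intro n y
    rw [EuclideanSpace.norm_eq, Real.sq_sqrt (by positivity)]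
    simp [Real.norm_eq_abs, sq_abs]
  have key : ‖alshQ D m q - alshP D m x‖ ^ 2
      = ∑ i : Fin (D + m), ((alshQ D m q - alshP D m x) i) ^ 2 := hsum _ _
  rw [key, Fin.sum_univ_add]
  have h1 : ∀ j : Fin D, (alshQ D m q - alshP D m x) (Fin.castAdd m j) = q j - x j := by
    intro j
    simp [alshQ, alshP, Fin.addCases_left]
  have h2 : ∀ j : Fin m,
      (alshQ D m q - alshP D m x) (Fin.natAdd D j) = 1 / 2 - ‖x‖ ^ (2 ^ (j.val + 1)) := by
    intro j
    simp [alshQ, alshP, Fin.addCases_right]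
  simp only [h1, h2]
  have e1 : ∑ j : Fin D, (q j - x j) ^ 2
      = ‖q‖ ^ 2 + ‖x‖ ^ 2 - 2 * ∑ i, q i * x i := by
    rw [hsum D q, hsum D x, Finset.mul_sum, ← Finset.sum_add_distrib, ← Finset.sum_sub_distrib]
    exact Finset.sum_congr rfl fun i _ => by ring
  have e2 : ∑ j : Fin m, (1 / 2 - ‖x‖ ^ (2 ^ (j.val + 1))) ^ 2
      = (m : ℝ) / 4 - ‖x‖ ^ 2 + ‖x‖ ^ (2 ^ (m + 1)) := by
    have h3 : ∀ k : ℕ, ‖x‖ ^ (2 ^ (k + 1)) = (‖x‖ ^ 2) ^ (2 ^ k) := by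
      intro k; rw [← pow_mul, pow_succ, mul_comm]
    simp only [h3]
    rw [alsh_telescope (‖x‖ ^ 2) m, ← h3]
  rw [e1, e2, hq]
  ring

theorem alsh_distance_bounds (D m : ℕ) (hm : 1 ≤ m) (U S₀ c : ℝ) (hU : U < 1)
    (q x : EuclideanSpace ℝ (Fin D)) (hq : ‖q‖ = 1) (hx : ‖x‖ ≤ U) :
    ((S₀ ≤ ∑ i, q i * x i) →
      ‖alshQ D m q - alshP D m x‖ ≤
        Real.sqrt (1 + (m : ℝ) / 4 - 2 * S₀ + U ^ (2 ^ (m + 1)))) ∧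
    (((∑ i, q i * x i) ≤ c * S₀) →
      Real.sqrt (1 + (m : ℝ) / 4 - 2 * c * S₀) ≤ ‖alshQ D m q - alshP D m x‖) := by
  have hsq := alsh_norm_sq D m q x hq
  have hN : ‖alshQ D m q - alshP D m x‖
      = Real.sqrt (1 + (m : ℝ) / 4 - 2 * (∑ i, q i * x i) + ‖x‖ ^ (2 ^ (m + 1))) := by
    rw [← hsq, Real.sqrt_sq (norm_nonneg _)]
  constructor
  · intro hS
    rw [hN]
    apply Real.sqrt_le_sqrt
    have hxU : ‖x‖ ^ (2 ^ (m + 1)) ≤ U ^ (2 ^ (m + 1)) :=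
      pow_le_pow_left₀ (norm_nonneg _) hx _
    linarith
  · intro hS
    rw [hN]
    apply Real.sqrt_le_sqrt
    have : (0:ℝ) ≤ ‖x‖ ^ (2 ^ (m + 1)) := by positivity
    linarith
end

section
/- Monotonicity of the transformed distance in the inner product: fix m and let q be a unit vector. For x, y with ||x||_2 = ||y||_2 ≤ U < 1, we have ||Q(q) - P(x)||_2 < ||Q(q) - P(y)||_2 if and only if q^T x > q^T y. -/
open RealInnerProductSpace

theorem EuclideanSpace.norm_sq_toLp_addCases {a b : ℕ} (u : Fin a → ℝ) (v : Fin b → ℝ) :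
    ‖WithLp.toLp 2 (fun i => Fin.addCases u v i : Fin (a + b) → ℝ)‖ ^ 2 =
      ‖WithLp.toLp 2 u‖ ^ 2 + ‖WithLp.toLp 2 v‖ ^ 2 := by
  simp only [EuclideanSpace.norm_sq_eq, Fin.sum_univ_add, Fin.addCases_left, Fin.addCases_right]

theorem alshQ_sub_alshP (D m : ℕ) (q x : EuclideanSpace ℝ (Fin D)) :
    alshQ D m q - alshP D m x = WithLp.toLp 2 (fun i => Fin.addCases (q - x).ofLp
      (fun j : Fin m => 1 / 2 - ‖x‖ ^ 2 ^ (j.val + 1)) i) := by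
  ext i
  induction i using Fin.addCases <;> simp [alshQ, alshP]

theorem norm_alshQ_sub_alshP_sq (D m : ℕ) (q x : EuclideanSpace ℝ (Fin D)) :
    ‖alshQ D m q - alshP D m x‖ ^ 2 =
      ‖q‖ ^ 2 + ‖x‖ ^ 2 + ∑ j : Fin m, (1 / 2 - ‖x‖ ^ 2 ^ (j.val + 1)) ^ 2 - 2 * ⟪q, x⟫ := by
  rw [alshQ_sub_alshP, EuclideanSpace.norm_sq_toLp_addCases, WithLp.toLp_ofLp,
    norm_sub_sq_real, EuclideanSpace.norm_sq_eq (WithLp.toLp 2 fun j : Fin m => _)]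
  simp only [Real.norm_eq_abs, sq_abs]
  ring

theorem norm_alshQ_sub_alshP_sq_sub_of_norm_eq (D m : ℕ) (q : EuclideanSpace ℝ (Fin D))
    {x y : EuclideanSpace ℝ (Fin D)} (hxy : ‖x‖ = ‖y‖) :
    ‖alshQ D m q - alshP D m x‖ ^ 2 - ‖alshQ D m q - alshP D m y‖ ^ 2 =
      -2 * (⟪q, x⟫ - ⟪q, y⟫) := by
  rw [norm_alshQ_sub_alshP_sq, norm_alshQ_sub_alshP_sq, hxy]
  ring

theorem EuclideanSpace.real_inner_eq_sum {ι : Type*} [Fintype ι] (x y : EuclideanSpace ℝ ι) :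
    ⟪x, y⟫ = ∑ i, x i * y i := by
  simp [PiLp.inner_apply, mul_comm]

theorem alsh_distance_monotone_general (D m : ℕ)
    (q : EuclideanSpace ℝ (Fin D))
    (x y : EuclideanSpace ℝ (Fin D)) (hxy : ‖x‖ = ‖y‖) :
    ‖alshQ D m q - alshP D m x‖ < ‖alshQ D m q - alshP D m y‖ ↔
      (∑ i, q i * y i) < ∑ i, q i * x i := by
  have hdiff := norm_alshQ_sub_alshP_sq_sub_of_norm_eq D m q hxy
  rw [← pow_lt_pow_iff_left₀ (norm_nonneg _) (norm_nonneg _) two_ne_zero,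
    ← EuclideanSpace.real_inner_eq_sum, ← EuclideanSpace.real_inner_eq_sum]
  constructor <;> intro h <;> linarith

theorem alsh_distance_monotone (D m : ℕ) (hm : 1 ≤ m) (U : ℝ) (hU : U < 1)
    (q : EuclideanSpace ℝ (Fin D)) (hq : ‖q‖ = 1)
    (x y : EuclideanSpace ℝ (Fin D)) (hxy : ‖x‖ = ‖y‖) (hx : ‖x‖ ≤ U) :
    ‖alshQ D m q - alshP D m x‖ < ‖alshQ D m q - alshP D m y‖ ↔
      (∑ i, q i * y i) < ∑ i, q i * x i :=
  alsh_distance_monotone_general D m q x y hxy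
end
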